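/- There exists a constant Δ₀ such that the following holds. Let G=(V,E) be a finite simple graph with maximum degree Δ ≥ Δ₀ and minimum degree δ ≥ (ln Δ)^8, and let C ⊆ V be a set of vertices such that every v ∈ C has at least d(v)/(2·ln³Δ) and at most 2·d(v)/ln³Δ neighbours in C, where d(v) is the degree of v in G. Then there exists a set E' of edges of G, each with both endpoints in C, such that for every v ∈ C the number of edges of E' incident with v satisfies 1 ≤ d_{E'}(v) ≤ d(v)/ln⁶Δ. -/

import Mathlib

/-!
Each `v ∈ C` picks a neighbour `f v ∈ C` and `E'` consists of the edges `v (f v)`, so the degree of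
`v` in `E'` is at most `1 + |f⁻¹(v)|`. With `L = ln Δ`, every `v ∈ C` has at least `K = L⁵/2`
neighbours in `C`. By double counting, Hall's condition holds once each `u` may be chosen
`⌈|N_C(u)| / K⌉ ≤ 1 + 4 d(u)/L⁸` times, and `2 + 4 d/L⁸ ≤ d/L⁶` as soon as `L ≥ 4` and `d ≥ L⁸`.
-/

open Finset

namespace Finset

variable {α β : Type*} [Fintype α] [DecidableEq β]

/-- Hall's theorem with capacities. -/
theorem exists_forall_mem_card_fiber_le (r : α → Finset β) (cap : β → ℕ)
    (hall : ∀ s : Finset α, #s ≤ ∑ b ∈ s.biUnion r, cap b) :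
    ∃ f : α → β, (∀ a, f a ∈ r a) ∧ ∀ b, #{a | f a = b} ≤ cap b := by
  let copies : α → Finset (Σ _ : β, ℕ) := fun a => (r a).sigma fun b => range (cap b)
  have hcopies : ∀ s : Finset α, #s ≤ #(s.biUnion copies) := by
    intro s
    have hunion : s.biUnion copies = (s.biUnion r).sigma fun b => range (cap b) := by
      ext ⟨b, i⟩
      simp [copies, ← and_assoc, exists_and_right]
    simpa [hunion, card_sigma] using hall s
  obtain ⟨g, hg_inj, hg_mem⟩ := (all_card_le_biUnion_card_iff_exists_injective copies).mp hcopies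
  refine ⟨fun a => (g a).1, fun a => (mem_sigma.mp (hg_mem a)).1, fun b => ?_⟩
  calc #{a | (g a).1 = b} ≤ #(range (cap b)) := by
        refine card_le_card_of_injOn (fun a => (g a).2) (fun a ha => ?_) (fun a ha a' ha' h => ?_)
        · obtain rfl := (mem_filter.mp ha).2
          exact (mem_sigma.mp (hg_mem a)).2
        · exact hg_inj (Sigma.ext ((mem_filter.mp ha).2.trans (mem_filter.mp ha').2.symm)
            (heq_of_eq h))
    _ = cap b := card_range _

theorem exists_forall_mem_card_fiber_le_ceil (r : α → Finset β) {K : ℝ} (hK : 0 < K)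
    (hr : ∀ a, K ≤ #(r a)) :
    ∃ f : α → β, (∀ a, f a ∈ r a) ∧ ∀ b, #{a | f a = b} ≤ ⌈(#{a | b ∈ r a} : ℝ) / K⌉₊ := by
  refine exists_forall_mem_card_fiber_le r _ fun s => ?_
  set t := s.biUnion r
  have hdouble : ∑ a ∈ s, #(r a) = ∑ b ∈ t, #(s.bipartiteBelow (fun a b => b ∈ r a) b) := by
    rw [← sum_card_bipartiteAbove_eq_sum_card_bipartiteBelow]
    refine sum_congr rfl fun a ha => ?_
    rw [bipartiteAbove, filter_mem_eq_inter, inter_eq_right.mpr (subset_biUnion_of_mem r ha)]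
  have hbelow : ∀ b, (#(s.bipartiteBelow (fun a b => b ∈ r a) b) : ℝ) ≤
      K * ⌈(#{a | b ∈ r a} : ℝ) / K⌉₊ := fun b =>
    calc (#(s.bipartiteBelow (fun a b => b ∈ r a) b) : ℝ) ≤ #{a | b ∈ r a} := by
          exact_mod_cast card_le_card (filter_subset_filter _ (subset_univ s))
      _ ≤ K * ⌈(#{a | b ∈ r a} : ℝ) / K⌉₊ := (div_le_iff₀' hK).mp (Nat.le_ceil _)
  have hcount : K * #s ≤ K * ((∑ b ∈ t, ⌈(#{a | b ∈ r a} : ℝ) / K⌉₊ : ℕ) : ℝ) :=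
    calc K * #s ≤ ∑ a ∈ s, (#(r a) : ℝ) := by
          simpa [mul_comm] using card_nsmul_le_sum s _ K fun a _ => hr a
      _ = ∑ b ∈ t, (#(s.bipartiteBelow (fun a b => b ∈ r a) b) : ℝ) := by exact_mod_cast hdouble
      _ ≤ K * ∑ b ∈ t, ⌈(#{a | b ∈ r a} : ℝ) / K⌉₊ := by
          push_cast
          rw [mul_sum]
          exact sum_le_sum fun b _ => hbelow b
  exact_mod_cast le_of_mul_le_mul_left hcount hK

end Finset

theorem ncard_filter_mem_range_sym2_le {α V : Type*} [Fintype α] [DecidableEq α] [DecidableEq V]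
    (g f : α → V) (v : V) :
    {e ∈ Set.range (fun a => s(g a, f a)) | v ∈ e}.ncard ≤ #{a | g a = v} + #{a | f a = v} := by
  set A : Finset α := {a | g a = v}
  set B : Finset α := {a | f a = v}
  calc {e ∈ Set.range (fun a => s(g a, f a)) | v ∈ e}.ncard
      ≤ (((A ∪ B).image fun a => s(g a, f a) : Finset (Sym2 V)) : Set (Sym2 V)).ncard := by
        refine Set.ncard_le_ncard ?_ (Set.toFinite _)
        rintro _ ⟨⟨a, rfl⟩, hv⟩
        simp only [A, B, coe_image, coe_union, coe_filter, mem_univ, true_and]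
        exact ⟨a, (Sym2.mem_iff.mp hv).imp Eq.symm Eq.symm, rfl⟩
    _ ≤ #(A ∪ B) := by
        rw [Set.ncard_coe_finset]
        exact card_image_le
    _ ≤ #A + #B := card_union_le A B

theorem four_le_log_of_le {x : ℝ} (hx : 81 ≤ x) : 4 ≤ Real.log x := by
  rw [Real.le_log_iff_exp_le (by linarith), show (4 : ℝ) = (4 : ℕ) * 1 by norm_num,
    Real.exp_nat_mul]
  calc Real.exp 1 ^ 4 ≤ 3 ^ 4 := by gcongr; exact Real.exp_one_lt_three.le
    _ ≤ x := by linarith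

theorem two_add_four_mul_div_le {L d : ℝ} (hL : 4 ≤ L) (hd : L ^ 8 ≤ d) :
    2 + 4 * d / L ^ 8 ≤ d / L ^ 6 := by
  have hL2 : 16 ≤ L ^ 2 := by nlinarith
  have ht : L ^ 2 ≤ d / L ^ 6 := by
    rw [le_div_iff₀ (by positivity)]; linarith [show L ^ 2 * L ^ 6 = L ^ 8 by ring]
  have hsplit : 4 * d / L ^ 8 = 4 / L ^ 2 * (d / L ^ 6) := by field_simp
  have h4 : 4 / L ^ 2 ≤ 1 / 4 := by rw [div_le_div_iff₀ (by positivity) (by norm_num)]; linarith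
  nlinarith

namespace SimpleGraph

variable {V : Type*} [Fintype V] (G : SimpleGraph V)

theorem exists_edgeSet_one_le_ncard_incident_le_ceil (C : Set V) {K : ℝ} (hK : 0 < K)
    (hC : ∀ v ∈ C, K ≤ {u | G.Adj v u ∧ u ∈ C}.ncard) :
    ∃ E' : Set (Sym2 V), E' ⊆ G.edgeSet ∧ (∀ e ∈ E', ∀ v ∈ e, v ∈ C) ∧
      ∀ v ∈ C, 1 ≤ {e ∈ E' | v ∈ e}.ncard ∧
        {e ∈ E' | v ∈ e}.ncard ≤ 1 + ⌈({u | G.Adj v u ∧ u ∈ C}.ncard : ℝ) / K⌉₊ := by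
  classical
  let nb (v : V) : Finset V := {u | G.Adj v u ∧ u ∈ C}.toFinset
  have hnb (v : V) : {u | G.Adj v u ∧ u ∈ C}.ncard = #(nb v) := Set.ncard_eq_toFinset_card' _
  obtain ⟨f, hf_mem, hf_fiber⟩ := exists_forall_mem_card_fiber_le_ceil (fun v : C => nb v) hK
    fun v => (hnb v) ▸ hC v v.2
  have hf_adj (v : C) : G.Adj v (f v) ∧ f v ∈ C := by simpa [nb] using hf_mem v
  have hnb_symm (u : V) : #{v : C | u ∈ nb v} ≤ #(nb u) := by
    refine card_le_card_of_injOn Subtype.val (fun v hv => ?_) Subtype.val_injective.injOn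
    simp only [nb, Set.toFinset_ofPred, mem_filter, mem_univ, true_and, coe_filter,
      Set.mem_ofPred_eq, Subtype.coe_prop, and_true] at hv ⊢
    exact hv.1.symm
  refine ⟨Set.range fun v : C => s(v.1, f v), ?_, ?_, fun v hv => ⟨?_, ?_⟩⟩
  · rintro _ ⟨v, rfl⟩
    exact (hf_adj v).1
  · rintro _ ⟨v, rfl⟩ w hw
    rcases Sym2.mem_iff.mp hw with rfl | rfl
    exacts [v.2, (hf_adj v).2]
  · exact (Set.ncard_pos (Set.toFinite _)).mpr ⟨_, ⟨⟨v, hv⟩, rfl⟩, Sym2.mem_mk_left _ _⟩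
  · have hself : #{a : C | a.1 = v} ≤ 1 := card_le_one.mpr fun a ha b hb =>
      Subtype.ext ((mem_filter.mp ha).2.trans (mem_filter.mp hb).2.symm)
    have hceil : ⌈(#{a : C | v ∈ nb a} : ℝ) / K⌉₊ ≤ ⌈(#(nb v) : ℝ) / K⌉₊ :=
      Nat.ceil_mono (by gcongr; exact_mod_cast hnb_symm v)
    rw [hnb]
    exact (ncard_filter_mem_range_sym2_le _ f v).trans
      (add_le_add hself ((hf_fiber v).trans hceil))

end SimpleGraph

/-- There exists `Δ₀` such that: if `G` has maximum degree `Δ ≥ Δ₀` and minimum degree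
`δ ≥ (ln Δ)^8`, and `C` is a set of vertices such that every `v ∈ C` has at least
`d(v)/(2 ln³Δ)` and at most `2 d(v)/ln³Δ` neighbours in `C`, then there is a set `E'` of
edges of `G`, each with both endpoints in `C`, such that every `v ∈ C` is incident with at
least one and at most `d(v)/ln⁶Δ` edges of `E'`. -/
theorem exists_sparse_spanning_edge_set :
    ∃ Δ₀ : ℕ, ∀ (V : Type*) [Fintype V] (G : SimpleGraph V) [DecidableRel G.Adj],
      Δ₀ ≤ G.maxDegree →
      (Real.log G.maxDegree) ^ 8 ≤ (G.minDegree : ℝ) →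
      ∀ C : Set V,
        (∀ v ∈ C,
          (G.degree v : ℝ) / (2 * (Real.log G.maxDegree) ^ 3) ≤
            ({u : V | G.Adj v u ∧ u ∈ C}.ncard : ℝ) ∧
          ({u : V | G.Adj v u ∧ u ∈ C}.ncard : ℝ) ≤
            2 * (G.degree v : ℝ) / (Real.log G.maxDegree) ^ 3) →
        ∃ E' : Set (Sym2 V), E' ⊆ G.edgeSet ∧ (∀ e ∈ E', ∀ v ∈ e, v ∈ C) ∧
          ∀ v ∈ C,
            1 ≤ {e ∈ E' | v ∈ e}.ncard ∧
            ({e ∈ E' | v ∈ e}.ncard : ℝ) ≤ (G.degree v : ℝ) / (Real.log G.maxDegree) ^ 6 := by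
  classical
  refine ⟨81, fun V _ G _ hΔ hδ C hC => ?_⟩
  set L := Real.log G.maxDegree
  have hL : 4 ≤ L := four_le_log_of_le (by exact_mod_cast hΔ)
  have hdeg (v : V) : L ^ 8 ≤ G.degree v := hδ.trans (mod_cast G.minDegree_le_degree v)
  set nC : V → ℕ := fun v => {u | G.Adj v u ∧ u ∈ C}.ncard
  have hK : ∀ v ∈ C, L ^ 5 / 2 ≤ nC v := fun v hv =>
    calc L ^ 5 / 2 = L ^ 8 / (2 * L ^ 3) := by field_simp
      _ ≤ G.degree v / (2 * L ^ 3) := by gcongr; exact hdeg v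
      _ ≤ nC v := (hC v hv).1
  obtain ⟨E', hE'G, hE'C, hE'⟩ :=
    G.exists_edgeSet_one_le_ncard_incident_le_ceil C (by positivity) hK
  refine ⟨E', hE'G, hE'C, fun v hv => ⟨(hE' v hv).1, ?_⟩⟩
  have hnC : nC v / (L ^ 5 / 2) ≤ 4 * G.degree v / L ^ 8 :=
    calc nC v / (L ^ 5 / 2) ≤ 2 * G.degree v / L ^ 3 / (L ^ 5 / 2) := by gcongr; exact (hC v hv).2
      _ = 4 * G.degree v / L ^ 8 := by field_simp; ring
  have hceil := Nat.ceil_lt_add_one (by positivity : 0 ≤ (nC v : ℝ) / (L ^ 5 / 2))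
  calc ({e ∈ E' | v ∈ e}.ncard : ℝ) ≤ 1 + ⌈(nC v : ℝ) / (L ^ 5 / 2)⌉₊ := mod_cast (hE' v hv).2
    _ ≤ 2 + 4 * G.degree v / L ^ 8 := by linarith
    _ ≤ G.degree v / L ^ 6 := two_add_four_mul_div_le hL (hdeg v)
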